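/- For every z ∈ ℂ with |z| ≤ 1 and every f ∈ C^k([0,1]) (k finite), the series Q_w(z)f = Σ_{n≥1} z^n · e^{w∘φ_n} · (f∘φ_n) converges absolutely in the norm ‖·‖_k to a C^k function on [0,1], and there is a constant C(k), independent of f and z, such that ‖Q_w(z)f‖_k ≤ C(k)·c_k·‖f‖_k; in particular Q_w(z) defines a bounded linear operator from C^k([0,1]) to C^k([0,1]). -/

import Mathlib

open Set Filter Topology Asymptotics MeasureTheory

noncomputable section

/-- The first passage time of `x` to the interval `(a,1)` under iteration of `T`
(`τ(x) = min {n ≥ 0 : Tⁿ x ∈ (a,1)}`). -/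
def tau (T : ℝ → ℝ) (a : ℝ) (x : ℝ) : ℕ := sInf {n : ℕ | T^[n] x ∈ Set.Ioo a 1}

/-- The jump transformation `G(x) = T^{1+τ(x)}(x)` of `T` on `(a,1)`. -/
def Gmap (T : ℝ → ℝ) (a : ℝ) (x : ℝ) : ℝ := T^[1 + tau T a x] x

/-- The sequence `a₀ = 1`, `a₁ = a`, `a_ℓ = ψ₀(a_{ℓ-1})`. -/
def aseq (ψ₀ : ℝ → ℝ) (a : ℝ) : ℕ → ℝ
  | 0 => 1
  | 1 => a
  | n + 2 => ψ₀ (aseq ψ₀ a (n + 1))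

/-- The level sets `A_ℓ = (a_ℓ, a_{ℓ-1})` of the first passage function. -/
def Aset (ψ₀ : ℝ → ℝ) (a : ℝ) (ℓ : ℕ) : Set ℝ := Set.Ioo (aseq ψ₀ a ℓ) (aseq ψ₀ a (ℓ - 1))

/-- The inverse branches `φ_ℓ = ψ₀^{ℓ-1} ∘ ψ₁` of the jump transformation. -/
def phib (ψ₀ ψ₁ : ℝ → ℝ) (ℓ : ℕ) : ℝ → ℝ := ψ₀^[ℓ - 1] ∘ ψ₁

/-- The induced potential `w(x) = ∑_{j=0}^{τ(x)} v(Tʲ x)`. -/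
def indw (T : ℝ → ℝ) (a : ℝ) (v : ℝ → ℝ) (x : ℝ) : ℝ :=
  ∑ j ∈ Finset.range (tau T a x + 1), v (T^[j] x)

/-- The `C^h` norm `‖f‖_h = max_{0 ≤ j ≤ h} sup_{[0,1]} |f^{(j)}|` of a function on `[0,1]`
(computed via the open interval `(0,1)`). -/
noncomputable def nrm {E : Type*} [NormedAddCommGroup E] [NormedSpace ℝ E]
    (h : ℕ) (f : ℝ → E) : ℝ :=
  (Finset.range (h + 1)).sup' ⟨0, Finset.mem_range.mpr (Nat.succ_pos h)⟩ fun j =>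
    sSup ((fun x => ‖iteratedDerivWithin j f (Set.Ioo (0 : ℝ) 1) x‖) '' Set.Ioo (0 : ℝ) 1)

/-- Hypotheses (H1)–(H5) on the parabolic map `T`. -/
structure Hyp (T : ℝ → ℝ) (a : ℝ) (ψ₀ ψ₁ : ℝ → ℝ) (r : ℕ∞) (c α ε ρ : ℝ) : Prop where
  ha : a ∈ Set.Ioo (0 : ℝ) 1
  hmaps : Set.MapsTo T (Set.Icc 0 1) (Set.Icc 0 1)
  mono0 : StrictMonoOn T (Set.Ioo 0 a)
  mono1 : StrictMonoOn T (Set.Ioo a 1) ∨ StrictAntiOn T (Set.Ioo a 1)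
  full0 : closure (T '' Set.Ioo 0 a) = Set.Icc 0 1
  full1 : closure (T '' Set.Ioo a 1) = Set.Icc 0 1
  hr : 2 ≤ r
  smooth0 : ContDiffOn ℝ r T (Set.Ioc 0 a)
  smooth1 : ContDiffOn ℝ r T (Set.Icc a 1)
  inv0 : ∀ y ∈ Set.Ioo (0 : ℝ) 1, ψ₀ y ∈ Set.Ioo 0 a ∧ T (ψ₀ y) = y
  inv0' : ∀ x ∈ Set.Ioo 0 a, ψ₀ (T x) = x
  inv1 : ∀ y ∈ Set.Ioo (0 : ℝ) 1, ψ₁ y ∈ Set.Ioo a 1 ∧ T (ψ₁ y) = y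
  inv1' : ∀ x ∈ Set.Ioo a 1, ψ₁ (T x) = x
  hc : 0 < c
  hα : 0 < α
  fix0 : T 0 = 0
  dT0 : derivWithin T (Set.Icc 0 1) 0 = 1
  asymp : Filter.Tendsto (fun x => (deriv T x - 1) / (c * x ^ α)) (nhdsWithin 0 (Set.Ioi 0)) (nhds 1)
  hε : 0 < ε
  hρ : 1 < ρ
  dmono : StrictMonoOn (deriv T) (Set.Ioo 0 ε)
  expand : ∀ x ∈ Set.Ico ε a ∪ Set.Ioo a 1, ρ ≤ |deriv T x|

/-- Hypothesis (H6) on the potential `v`: it is `C^k` on each branch interval and extends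
to a `C^k` function on `[0,a]` and on `[a,1]`; `v 0` is declared to be the value at `0`
of the extension to `[0,a]`. -/
structure HypV (a : ℝ) (v : ℝ → ℝ) (k : ℕ∞) : Prop where
  ext0 : ∃ v0 : ℝ → ℝ, ContDiffOn ℝ k v0 (Set.Icc 0 a) ∧ Set.EqOn v v0 (Set.Ioo 0 a) ∧ v 0 = v0 0
  ext1 : ∃ v1 : ℝ → ℝ, ContDiffOn ℝ k v1 (Set.Icc a 1) ∧ Set.EqOn v v1 (Set.Ioo a 1)

/-- Hypothesis (H7): `∑_n ‖e^{w∘φ_n}‖_h (1 + ‖φ_n‖_h^h) ≤ c_k` for all `h ≤ k`. -/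
def H7 (T : ℝ → ℝ) (a : ℝ) (ψ₀ ψ₁ v : ℝ → ℝ) (k : ℕ) (ck : ℝ) : Prop :=
  ∀ h : ℕ, h ≤ k →
    Summable (fun n : ℕ =>
      nrm h (fun x => Real.exp (indw T a v (phib ψ₀ ψ₁ (n + 1) x))) *
        (1 + nrm h (phib ψ₀ ψ₁ (n + 1)) ^ h)) ∧
    (∑' n : ℕ,
      nrm h (fun x => Real.exp (indw T a v (phib ψ₀ ψ₁ (n + 1) x))) *
        (1 + nrm h (phib ψ₀ ψ₁ (n + 1)) ^ h)) ≤ ck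

/-- Composition `φ_β = φ_{β₁} ∘ ⋯ ∘ φ_{β_m}` along a list `β` of branch indices. -/
def phibList (ψ₀ ψ₁ : ℝ → ℝ) : List ℕ → ℝ → ℝ
  | [], x => x
  | n :: l, x => phib ψ₀ ψ₁ n (phibList ψ₀ ψ₁ l x)

/-- The weight `W_β(x) = exp (∑_{j=1}^m w(φ_{β_j  … β_m}(x)))`. -/
def Wb (T : ℝ → ℝ) (a : ℝ) (ψ₀ ψ₁ v : ℝ → ℝ) : List ℕ → ℝ → ℝ
  | [], _ => 1
  | n :: l, x =>
      Real.exp (indw T a v (phib ψ₀ ψ₁ n (phibList ψ₀ ψ₁ l x))) * Wb T a ψ₀ ψ₁ v l x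

/-- `Λ_m(z) = sup_{x ∈ (0,1)} ∑_{β ∈ ℕ_{≥1}^m} |z|^{|β|} W_β(x)`, as a function of `|z|`. -/
noncomputable def Lam (T : ℝ → ℝ) (a : ℝ) (ψ₀ ψ₁ v : ℝ → ℝ) (m : ℕ) (zn : ℝ) : ℝ :=
  sSup ((fun x => ∑' β : Fin m → ℕ,
      zn ^ (m + ∑ i, β i) * Wb T a ψ₀ ψ₁ v (List.ofFn fun i => β i + 1) x) '' Set.Ioo (0 : ℝ) 1)

/-!
Each term `zⁿ e^{w∘φ_n} (f∘φ_n)` agrees on `(0,1)` with a `C^k` function on `[0,1]`. Indeed the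
inverse branches `ψ₀, ψ₁` extend to `C^k` maps on `(0,1]` and `[0,1]` (inverse function theorem,
then bootstrapping `ψ' = (T' ∘ ψ)⁻¹`), and the first passage time is constant on `A_n`, so
`w ∘ φ_n` is a finite sum of `C^k` functions. The Leibniz rule and Faà di Bruno's bound give
`‖zⁿ e^{w∘φ_n} (f∘φ_n)‖_k ≤ 4^k k! ‖e^{w∘φ_n}‖_k (1 + ‖φ_n‖_k^k) ‖f‖_k`, which is summable by (H7).
A series of `C^k` functions on `[0,1]` with summable `C^k` norms is summed by extending each term
to `ℝ` (Taylor polynomials at the endpoints, then a cutoff) and differentiating term by term.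
-/

section UnitInterval

variable {E : Type*} [NormedAddCommGroup E] [NormedSpace ℝ E]

lemma sSup_le_nrm (f : ℝ → E) {j k : ℕ} (hj : j ≤ k) :
    sSup ((fun x => ‖iteratedDerivWithin j f (Ioo 0 1) x‖) '' Ioo (0 : ℝ) 1) ≤ nrm k f :=
  Finset.le_sup' (f := fun j => sSup ((fun x => ‖iteratedDerivWithin j f (Ioo 0 1) x‖) ''
    Ioo (0 : ℝ) 1)) (Finset.mem_range.mpr (Nat.lt_succ_of_le hj))

lemma nrm_nonneg (k : ℕ) (f : ℝ → E) : 0 ≤ nrm k f :=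
  (Real.sSup_nonneg (by rintro _ ⟨x, -, rfl⟩; positivity)).trans (sSup_le_nrm f k.zero_le)

lemma nrm_le {k : ℕ} {f : ℝ → E} {M : ℝ} (hM : 0 ≤ M)
    (hf : ∀ j ≤ k, ∀ x ∈ Ioo (0 : ℝ) 1, ‖iteratedDerivWithin j f (Ioo 0 1) x‖ ≤ M) :
    nrm k f ≤ M :=
  Finset.sup'_le _ _ fun j hj => Real.sSup_le
    (by rintro _ ⟨x, hx, rfl⟩; exact hf j (Nat.lt_succ_iff.mp (Finset.mem_range.mp hj)) x hx) hM

lemma iteratedDerivWithin_Ioo_eq_Icc {g h : ℝ → E} (hgh : EqOn h g (Ioo 0 1)) (j : ℕ)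
    {x : ℝ} (hx : x ∈ Ioo (0 : ℝ) 1) :
    iteratedDerivWithin j h (Ioo 0 1) x = iteratedDerivWithin j g (Icc 0 1) x := by
  have hset : Ioo (0 : ℝ) 1 =ᶠ[𝓝 x] Icc (0 : ℝ) 1 := by
    filter_upwards [isOpen_Ioo.mem_nhds hx] with y hy
    exact eq_iff_iff.mpr (iff_of_true hy (Ioo_subset_Icc_self hy))
  rw [iteratedDerivWithin_congr hgh hx, iteratedDerivWithin_eq_iteratedFDerivWithin,
    iteratedFDerivWithin_congr_set hset, ← iteratedDerivWithin_eq_iteratedFDerivWithin]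

lemma nrm_le_of_eqOn {k : ℕ} {g h : ℝ → E} {M : ℝ} (hgh : EqOn h g (Ioo 0 1)) (hM : 0 ≤ M)
    (hg : ∀ j ≤ k, ∀ x ∈ Icc (0 : ℝ) 1, ‖iteratedDerivWithin j g (Icc 0 1) x‖ ≤ M) :
    nrm k h ≤ M :=
  nrm_le hM fun j hj x hx => by
    rw [iteratedDerivWithin_Ioo_eq_Icc hgh j hx]
    exact hg j hj x (Ioo_subset_Icc_self hx)

/-- `nrm` only sees `(0,1)`; continuity of the derivatives of a `C^k` extension carries its
bound to the endpoints. -/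
lemma norm_iteratedDerivWithin_le_nrm {k j : ℕ} {g h : ℝ → E}
    (hg : ContDiffOn ℝ k g (Icc 0 1)) (hgh : EqOn h g (Ioo 0 1)) (hj : j ≤ k)
    {x : ℝ} (hx : x ∈ Icc (0 : ℝ) 1) :
    ‖iteratedDerivWithin j g (Icc 0 1) x‖ ≤ nrm k h := by
  have hcont : ContinuousOn (fun y => ‖iteratedDerivWithin j g (Icc 0 1) y‖) (Icc 0 1) :=
    (hg.continuousOn_iteratedDerivWithin (by exact_mod_cast hj)
      (uniqueDiffOn_Icc zero_lt_one)).norm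
  obtain ⟨C, hC⟩ := isCompact_Icc.exists_bound_of_continuousOn hcont
  have hbdd : BddAbove ((fun y => ‖iteratedDerivWithin j h (Ioo 0 1) y‖) '' Ioo (0 : ℝ) 1) := by
    refine ⟨C, ?_⟩
    rintro _ ⟨y, hy, rfl⟩
    dsimp only
    rw [iteratedDerivWithin_Ioo_eq_Icc hgh j hy]
    simpa using hC y (Ioo_subset_Icc_self hy)
  have hle : ∀ y ∈ Ioo (0 : ℝ) 1, ‖iteratedDerivWithin j g (Icc 0 1) y‖ ≤ nrm k h := by
    intro y hy
    rw [← iteratedDerivWithin_Ioo_eq_Icc hgh j hy]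
    exact (le_csSup hbdd ⟨y, hy, rfl⟩).trans (sSup_le_nrm h hj)
  have hcl : x ∈ closure (Ioo (0 : ℝ) 1) := by rwa [closure_Ioo zero_ne_one]
  exact ContinuousWithinAt.closure_le hcl ((hcont x hx).mono Ioo_subset_Icc_self)
    continuousWithinAt_const hle

lemma norm_taylorWithinEval_le {m : ℕ} {g : ℝ → E} {s : Set ℝ} {e y M : ℝ} (hye : |y - e| ≤ 1)
    (hM : ∀ j ≤ m, ‖iteratedDerivWithin j g s e‖ ≤ M) :
    ‖taylorWithinEval g m s e y‖ ≤ (m + 1) * M := by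
  rw [taylor_within_apply]
  refine (norm_sum_le _ _).trans ?_
  calc _ ≤ ∑ _j ∈ Finset.range (m + 1), M := Finset.sum_le_sum fun j hj => ?_
    _ = (m + 1) * M := by simp
  have hc : ‖(j.factorial : ℝ)⁻¹ * (y - e) ^ j‖ ≤ 1 := by
    rw [norm_mul, norm_pow, norm_inv, Real.norm_natCast, Real.norm_eq_abs]
    exact mul_le_one₀ (inv_le_one_of_one_le₀ (by exact_mod_cast j.factorial_pos))
      (by positivity) (pow_le_one₀ (abs_nonneg _) hye)
  rw [norm_smul]
  exact (mul_le_mul hc (hM j (Nat.lt_succ_iff.mp (Finset.mem_range.mp hj))) (norm_nonneg _)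
    zero_le_one).trans (one_mul M).le

def taylorExtend (m : ℕ) (g : ℝ → E) (y : ℝ) : E :=
  if y < 0 then taylorWithinEval g m (Icc 0 1) 0 y
  else if y ≤ 1 then g y else taylorWithinEval g m (Icc 0 1) 1 y

lemma taylorExtend_eqOn_Iic (m : ℕ) (g : ℝ → E) :
    EqOn (taylorExtend m g) (taylorWithinEval g m (Icc 0 1) 0) (Iic 0) := by
  intro y hy
  rcases (mem_Iic.mp hy).lt_or_eq with h | rfl
  · simp [taylorExtend, h]
  · simp [taylorExtend, taylorWithinEval_self]

lemma taylorExtend_eqOn_Icc (m : ℕ) (g : ℝ → E) : EqOn (taylorExtend m g) g (Icc 0 1) := by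
  intro y hy
  simp [taylorExtend, not_lt.mpr hy.1, hy.2]

lemma taylorExtend_eqOn_Ici (m : ℕ) (g : ℝ → E) :
    EqOn (taylorExtend m g) (taylorWithinEval g m (Icc 0 1) 1) (Ici 1) := by
  intro y hy
  rcases (mem_Ici.mp hy).lt_or_eq with h | rfl
  · simp [taylorExtend, not_lt.mpr (zero_le_one.trans h.le), not_le.mpr h]
  · simp [taylorExtend, taylorWithinEval_self]

lemma hasDerivAt_taylorExtend_succ {m : ℕ} {g : ℝ → E} (hg : DifferentiableOn ℝ g (Icc 0 1))
    (y : ℝ) :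
    HasDerivAt (taylorExtend (m + 1) g) (taylorExtend m (derivWithin g (Icc 0 1)) y) y := by
  have hL : HasDerivWithinAt (taylorExtend (m + 1) g)
      (taylorExtend m (derivWithin g (Icc 0 1)) y) (Iic 0) y := by
    by_cases hy : y ∈ Iic 0
    · rw [taylorExtend_eqOn_Iic m _ hy]
      exact (hasDerivAt_taylorWithinEval_succ g m).hasDerivWithinAt.congr
        (taylorExtend_eqOn_Iic _ g) (taylorExtend_eqOn_Iic _ g hy)
    · exact HasFDerivWithinAt.of_notMem_closure (by rwa [closure_Iic])
  have hM : HasDerivWithinAt (taylorExtend (m + 1) g)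
      (taylorExtend m (derivWithin g (Icc 0 1)) y) (Icc 0 1) y := by
    by_cases hy : y ∈ Icc (0 : ℝ) 1
    · rw [taylorExtend_eqOn_Icc m _ hy]
      exact (hg y hy).hasDerivWithinAt.congr (taylorExtend_eqOn_Icc _ g)
        (taylorExtend_eqOn_Icc _ g hy)
    · exact HasFDerivWithinAt.of_notMem_closure (by rwa [closure_Icc])
  have hR : HasDerivWithinAt (taylorExtend (m + 1) g)
      (taylorExtend m (derivWithin g (Icc 0 1)) y) (Ici 1) y := by
    by_cases hy : y ∈ Ici 1
    · rw [taylorExtend_eqOn_Ici m _ hy]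
      exact (hasDerivAt_taylorWithinEval_succ g m).hasDerivWithinAt.congr
        (taylorExtend_eqOn_Ici _ g) (taylorExtend_eqOn_Ici _ g hy)
    · exact HasFDerivWithinAt.of_notMem_closure (by rwa [closure_Ici])
  have h := (hL.union hM).union hR
  rwa [Iic_union_Icc_eq_Iic zero_le_one, Iic_union_Ici, hasDerivWithinAt_univ] at h

lemma deriv_taylorExtend_succ {m : ℕ} {g : ℝ → E} (hg : DifferentiableOn ℝ g (Icc 0 1)) :
    deriv (taylorExtend (m + 1) g) = taylorExtend m (derivWithin g (Icc 0 1)) :=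
  funext fun y => (hasDerivAt_taylorExtend_succ hg y).deriv

lemma contDiff_taylorExtend {m : ℕ} {g : ℝ → E} (hg : ContDiffOn ℝ m g (Icc 0 1)) :
    ContDiff ℝ m (taylorExtend m g) := by
  induction m generalizing g with
  | zero =>
    have hproj : taylorExtend 0 g = fun y => g (max 0 (min y 1)) := by
      funext y
      unfold taylorExtend
      split_ifs with h₀ h₁
      · rw [taylor_within_zero_eval, min_eq_left (by linarith), max_eq_left (by linarith)]
      · rw [min_eq_left h₁, max_eq_right (not_lt.mp h₀)]
      · rw [taylor_within_zero_eval, min_eq_right (by linarith), max_eq_right zero_le_one]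
    rw [Nat.cast_zero, contDiff_zero, hproj]
    exact hg.continuousOn.comp_continuous (by fun_prop)
      fun y => ⟨le_max_left _ _, max_le zero_le_one (min_le_right _ _)⟩
  | succ m ih =>
    rw [Nat.cast_succ, contDiffOn_succ_iff_derivWithin (uniqueDiffOn_Icc zero_lt_one)] at hg
    rw [Nat.cast_succ, contDiff_succ_iff_deriv, deriv_taylorExtend_succ hg.1]
    exact ⟨fun y => (hasDerivAt_taylorExtend_succ hg.1 y).differentiableAt, by simp, ih hg.2.2⟩

lemma norm_taylorExtend_le {m : ℕ} {g : ℝ → E} {M : ℝ}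
    (hM : ∀ j ≤ m, ∀ x ∈ Icc (0 : ℝ) 1, ‖iteratedDerivWithin j g (Icc 0 1) x‖ ≤ M)
    {y : ℝ} (hy : y ∈ Icc (-1 : ℝ) 2) : ‖taylorExtend m g y‖ ≤ (m + 1) * M := by
  have hM0 : 0 ≤ M := (norm_nonneg _).trans (hM 0 m.zero_le 0 (left_mem_Icc.mpr zero_le_one))
  unfold taylorExtend
  split_ifs with h₀ h₁
  · exact norm_taylorWithinEval_le (abs_le.mpr ⟨by linarith [hy.1], by linarith⟩)
      fun j hj => hM j hj 0 (left_mem_Icc.mpr zero_le_one)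
  · have h := hM 0 m.zero_le y ⟨not_lt.mp h₀, h₁⟩
    rw [iteratedDerivWithin_zero] at h
    exact h.trans (le_mul_of_one_le_left hM0 (by linarith [(m.cast_nonneg : (0 : ℝ) ≤ m)]))
  · exact norm_taylorWithinEval_le (abs_le.mpr ⟨by linarith, by linarith [hy.2]⟩)
      fun j hj => hM j hj 1 (right_mem_Icc.mpr zero_le_one)

lemma norm_iteratedDeriv_taylorExtend_le {m : ℕ} {g : ℝ → E} {M : ℝ}
    (hg : ContDiffOn ℝ m g (Icc 0 1))
    (hM : ∀ j ≤ m, ∀ x ∈ Icc (0 : ℝ) 1, ‖iteratedDerivWithin j g (Icc 0 1) x‖ ≤ M)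
    {j : ℕ} (hj : j ≤ m) {y : ℝ} (hy : y ∈ Icc (-1 : ℝ) 2) :
    ‖iteratedDeriv j (taylorExtend m g) y‖ ≤ (m + 1) * M := by
  induction m generalizing g j with
  | zero =>
    rw [Nat.le_zero.mp hj, iteratedDeriv_zero]
    exact norm_taylorExtend_le hM hy
  | succ m ih =>
    cases j with
    | zero => simpa using norm_taylorExtend_le hM hy
    | succ j =>
      have hM0 : 0 ≤ M := (norm_nonneg _).trans (hM 0 (by omega) 0 (left_mem_Icc.mpr zero_le_one))
      rw [Nat.cast_succ, contDiffOn_succ_iff_derivWithin (uniqueDiffOn_Icc zero_lt_one)] at hg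
      rw [iteratedDeriv_succ', deriv_taylorExtend_succ hg.1]
      refine (ih hg.2.2 (fun i hi x hx => ?_) (by omega)).trans (by push_cast; linarith)
      rw [← iteratedDerivWithin_succ']
      exact hM (i + 1) (by omega) x hx

lemma exists_contDiff_extension_of_Icc (k : ℕ) : ∃ C > 0, ∀ (g : ℝ → E) (M : ℝ),
    ContDiffOn ℝ k g (Icc 0 1) →
    (∀ j ≤ k, ∀ x ∈ Icc (0 : ℝ) 1, ‖iteratedDerivWithin j g (Icc 0 1) x‖ ≤ M) →
    ∃ G : ℝ → E, ContDiff ℝ k G ∧ EqOn G g (Icc 0 1) ∧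
      ∀ j ≤ k, ∀ y, ‖iteratedFDeriv ℝ j G y‖ ≤ C * M := by
  -- a cutoff equal to `1` on `[-0.1, 1.1]` and supported in `[-0.9, 1.9] ⊆ [-1, 2]`
  let χ : ContDiffBump (1 / 2 : ℝ) := ⟨0.6, 1.4, by norm_num, by norm_num⟩
  obtain ⟨K, hK0, hK⟩ : ∃ K > 0, ∀ j ≤ k, ∀ y, ‖iteratedFDeriv ℝ j (χ : ℝ → ℝ) y‖ ≤ K := by
    have h : ∀ j, ∃ K, ∀ y, ‖iteratedFDeriv ℝ j (χ : ℝ → ℝ) y‖ ≤ K := fun j =>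
      (χ.contDiff.continuous_iteratedFDeriv (m := j) (by exact_mod_cast le_top)
        ).bounded_above_of_compact_support (χ.hasCompactSupport.iteratedFDeriv j)
    choose Kf hKf using h
    refine ⟨1 + ∑ j ∈ Finset.range (k + 1), |Kf j|, by positivity, fun j hj y => ?_⟩
    have := Finset.single_le_sum (fun i _ => abs_nonneg (Kf i))
      (Finset.mem_range.mpr (Nat.lt_succ_of_le hj))
    linarith [hKf j y, le_abs_self (Kf j)]
  refine ⟨2 ^ k * K * (k + 1), by positivity, fun g M hg hM => ?_⟩
  have hM0 : 0 ≤ M := (norm_nonneg _).trans (hM 0 k.zero_le 0 (left_mem_Icc.mpr zero_le_one))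
  refine ⟨fun y => χ y • taylorExtend k g y, χ.contDiff.smul (contDiff_taylorExtend hg),
    fun x hx => ?_, fun j hj y => ?_⟩
  · have h1 : χ x = 1 := χ.one_of_mem_closedBall <| by
      rw [Metric.mem_closedBall, Real.dist_eq, abs_le]
      constructor <;> linarith [hx.1, hx.2]
    simp [h1, taylorExtend_eqOn_Icc k g hx]
  by_cases hy : y ∈ tsupport (χ : ℝ → ℝ)
  · have hyI : y ∈ Icc (-1 : ℝ) 2 := by
      rw [χ.tsupport_eq, Metric.mem_closedBall, Real.dist_eq, abs_le] at hy
      constructor <;> linarith [hy.1, hy.2]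
    refine (norm_iteratedFDeriv_smul_le χ.contDiff (contDiff_taylorExtend hg) y
      (by exact_mod_cast hj)).trans ?_
    calc _ ≤ ∑ i ∈ Finset.range (j + 1), (j.choose i : ℝ) * (K * ((k + 1) * M)) := by
          refine Finset.sum_le_sum fun i hi => ?_
          have hi : i ≤ j := Nat.lt_succ_iff.mp (Finset.mem_range.mp hi)
          rw [mul_assoc]
          gcongr
          · exact hK i (hi.trans hj) y
          · rw [norm_iteratedFDeriv_eq_norm_iteratedDeriv]
            exact norm_iteratedDeriv_taylorExtend_le hg hM (by omega) hyI
      _ = 2 ^ j * (K * ((k + 1) * M)) := by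
          rw [← Finset.sum_mul, ← Nat.cast_sum, Nat.sum_range_choose, Nat.cast_pow, Nat.cast_ofNat]
      _ ≤ 2 ^ k * K * (k + 1) * M := by
          rw [show (2 : ℝ) ^ k * K * (k + 1) * M = 2 ^ k * (K * ((k + 1) * M)) by ring]
          gcongr
          norm_num
  · have h0 : iteratedFDeriv ℝ j (fun y => χ y • taylorExtend k g y) y = 0 :=
      Function.notMem_support.mp fun h =>
        hy (tsupport_smul_subset_left _ _ (support_iteratedFDeriv_subset j h))
    rw [h0, norm_zero]
    positivity

theorem exists_hasSum_contDiffOn_Icc [CompleteSpace E] (k : ℕ) :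
    ∃ C > 0, ∀ (g : ℕ → ℝ → E) (M : ℕ → ℝ), (∀ n, ContDiffOn ℝ k (g n) (Icc 0 1)) →
    (∀ n, ∀ j ≤ k, ∀ x ∈ Icc (0 : ℝ) 1, ‖iteratedDerivWithin j (g n) (Icc 0 1) x‖ ≤ M n) →
    Summable M → ∃ F : ℝ → E, ContDiffOn ℝ k F (Icc 0 1) ∧
      (∀ x ∈ Icc (0 : ℝ) 1, HasSum (fun n => g n x) (F x)) ∧ nrm k F ≤ C * ∑' n, M n := by
  obtain ⟨C, hC, hext⟩ := exists_contDiff_extension_of_Icc (E := E) k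
  refine ⟨C, hC, fun g M hg hM hMs => ?_⟩
  choose G hG hGg hGM using fun n => hext (g n) (M n) (hg n) (hM n)
  have hCM : Summable fun n => C * M n := hMs.mul_left C
  have hGM' : ∀ (j : ℕ) (n : ℕ) (y : ℝ), (j : ℕ∞) ≤ k →
      ‖iteratedFDeriv ℝ j (G n) y‖ ≤ C * M n :=
    fun j n y hj => hGM n j (by exact_mod_cast hj) y
  refine ⟨fun y => ∑' n, G n y, (contDiff_tsum hG (fun _ _ => hCM)
    fun j n y hj => hGM' j n y (by exact_mod_cast hj)).contDiffOn, fun x hx => ?_, ?_⟩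
  · have hs : Summable fun n => G n x := hCM.of_norm_bounded fun n => by
      simpa using hGM n 0 k.zero_le x
    simpa only [hGg _ hx] using hs.hasSum
  · have hM0 : ∀ n, 0 ≤ M n := fun n =>
      (norm_nonneg _).trans (hM n 0 k.zero_le 0 (left_mem_Icc.mpr zero_le_one))
    refine nrm_le (mul_nonneg hC.le (tsum_nonneg hM0)) fun j hj x hx => ?_
    rw [← norm_iteratedFDerivWithin_eq_norm_iteratedDerivWithin,
      iteratedFDerivWithin_of_isOpen j isOpen_Ioo hx,
      iteratedFDeriv_tsum_apply hG (fun _ _ => hCM) hGM' (by exact_mod_cast hj), ← tsum_mul_left]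
    exact tsum_of_norm_bounded hCM.hasSum fun n => hGM n j hj x

lemma norm_iteratedDerivWithin_smul_comp_le {k j : ℕ} {e φ : ℝ → ℝ} {f : ℝ → E} {A B P : ℝ}
    (he : ContDiffOn ℝ k e (Icc 0 1)) (hφ : ContDiffOn ℝ k φ (Icc 0 1))
    (hf : ContDiffOn ℝ k f (Icc 0 1)) (hφI : MapsTo φ (Icc 0 1) (Icc 0 1))
    (hA : ∀ i ≤ k, ∀ x ∈ Icc (0 : ℝ) 1, ‖iteratedDerivWithin i e (Icc 0 1) x‖ ≤ A)
    (hP : ∀ i ≤ k, ∀ x ∈ Icc (0 : ℝ) 1, ‖iteratedDerivWithin i φ (Icc 0 1) x‖ ≤ P)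
    (hB : ∀ i ≤ k, ∀ x ∈ Icc (0 : ℝ) 1, ‖iteratedDerivWithin i f (Icc 0 1) x‖ ≤ B)
    (hj : j ≤ k) {x : ℝ} (hx : x ∈ Icc (0 : ℝ) 1) :
    ‖iteratedDerivWithin j (fun y => e y • f (φ y)) (Icc 0 1) x‖ ≤
      4 ^ k * k.factorial * A * B * (1 + P ^ k) := by
  have hU : UniqueDiffOn ℝ (Icc (0 : ℝ) 1) := uniqueDiffOn_Icc zero_lt_one
  have hA0 : 0 ≤ A := (norm_nonneg _).trans (hA 0 k.zero_le x hx)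
  have hB0 : 0 ≤ B := (norm_nonneg _).trans (hB 0 k.zero_le x hx)
  have hP0 : 0 ≤ P := (norm_nonneg _).trans (hP 0 k.zero_le x hx)
  have hcomp : ∀ i ≤ k, ‖iteratedFDerivWithin ℝ i (f ∘ φ) (Icc 0 1) x‖ ≤
      k.factorial * B * (1 + P) ^ k := by
    intro i hi
    refine (norm_iteratedFDerivWithin_comp_le hf hφ (by exact_mod_cast hi) hU hU hφI hx
      (C := B) (D := 1 + P) (fun l hl => ?_) (fun l hl₁ hl₂ => ?_)).trans ?_
    · rw [norm_iteratedFDerivWithin_eq_norm_iteratedDerivWithin]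
      exact hB l (hl.trans hi) _ (hφI hx)
    · rw [norm_iteratedFDerivWithin_eq_norm_iteratedDerivWithin]
      exact (hP l (hl₂.trans hi) x hx).trans
        ((le_add_of_nonneg_left zero_le_one).trans (le_self_pow₀ (by linarith) (by omega)))
    · gcongr
      linarith
  rw [← norm_iteratedFDerivWithin_eq_norm_iteratedDerivWithin]
  refine (norm_iteratedFDerivWithin_smul_le he (hf.comp hφ hφI) hU hx
    (by exact_mod_cast hj)).trans ?_
  calc _ ≤ ∑ i ∈ Finset.range (j + 1),
        (j.choose i : ℝ) * (A * (k.factorial * B * (1 + P) ^ k)) := by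
        refine Finset.sum_le_sum fun i hi => ?_
        have hi : i ≤ j := Nat.lt_succ_iff.mp (Finset.mem_range.mp hi)
        rw [mul_assoc]
        gcongr
        · rw [norm_iteratedFDerivWithin_eq_norm_iteratedDerivWithin]
          exact hA i (hi.trans hj) x hx
        · exact hcomp (j - i) (by omega)
    _ = 2 ^ j * (A * (k.factorial * B * (1 + P) ^ k)) := by
        rw [← Finset.sum_mul, ← Nat.cast_sum, Nat.sum_range_choose, Nat.cast_pow, Nat.cast_ofNat]
    _ ≤ 2 ^ k * (A * (k.factorial * B * (2 ^ k * (1 + P ^ k)))) := by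
        have h1 : (1 + P) ^ k ≤ 2 ^ k * (1 + P ^ k) := by
          refine (add_pow_le zero_le_one hP0 k).trans ?_
          rw [one_pow]
          gcongr
          · norm_num
          · omega
        gcongr
        norm_num
    _ = 4 ^ k * k.factorial * A * B * (1 + P ^ k) := by
        rw [show (4 : ℝ) = 2 * 2 by norm_num, mul_pow]
        ring

end UnitInterval

section InverseBranches

lemma hasDerivAt_of_rightInverse {T ψ : ℝ → ℝ} {S U : Set ℝ} {T' y : ℝ} (hS : IsOpen S)
    (hU : IsOpen U) (hinj : InjOn T S) (hψ : MapsTo ψ U S) (hTψ : ∀ z ∈ U, T (ψ z) = z)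
    (hy : y ∈ U) (hT : HasStrictDerivAt T T' (ψ y)) (hT' : T' ≠ 0) : HasDerivAt ψ T'⁻¹ y := by
  set g := hT.localInverse T T' (ψ y) hT'
  have hg : HasDerivAt g T'⁻¹ y := hTψ y hy ▸ (hT.to_localInverse hT').hasDerivAt
  have hgy : g y = ψ y := by
    have := (hT.eventually_left_inverse hT').self_of_nhds
    rwa [hTψ y hy] at this
  have hTg : ∀ᶠ z in 𝓝 y, T (g z) = z := hTψ y hy ▸ hT.eventually_right_inverse hT'
  refine hg.congr_of_eventuallyEq ?_
  filter_upwards [hg.continuousAt.preimage_mem_nhds (hS.mem_nhds (hgy ▸ hψ hy)), hTg,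
    hU.mem_nhds hy] with z hgz hTgz hz
  exact hinj (hψ hz) hgz (by rw [hTψ z hz, hTgz])

lemma hasDerivWithinAt_Icc_of_hasDerivAt_Ioo {Ψ u : ℝ → ℝ} {c d : ℝ} (hcd : c < d)
    (hΨ : ContinuousOn Ψ (Icc c d)) (hu : ContinuousOn u (Icc c d))
    (hderiv : ∀ x ∈ Ioo c d, HasDerivAt Ψ (u x) x) {x : ℝ} (hx : x ∈ Icc c d) :
    HasDerivWithinAt Ψ (u x) (Icc c d) x := by
  rw [← closure_Ioo hcd.ne] at hΨ hx ⊢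
  refine hasFDerivWithinAt_closure_of_tendsto_fderiv
    (fun y hy => (hderiv y hy).differentiableAt.differentiableWithinAt) (convex_Ioo c d)
    isOpen_Ioo (fun y hy => (hΨ y hy).mono subset_closure) ?_
  have hux : Tendsto u (𝓝[Ioo c d] x) (𝓝 (u x)) :=
    (hu x (by rwa [closure_Ioo hcd.ne] at hx)).mono Ioo_subset_Icc_self
  refine (((ContinuousLinearMap.smulRightL ℝ ℝ ℝ 1).continuous.tendsto _).comp hux).congr' ?_
  filter_upwards [self_mem_nhdsWithin] with y hy
  exact (hderiv y hy).hasFDerivAt.fderiv.symm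

lemma contDiffOn_Icc_of_hasDerivAt_comp {k : ℕ} {Ψ G : ℝ → ℝ} {c d : ℝ} {S : Set ℝ}
    (hcd : c < d) (hG : ContDiffOn ℝ k G S) (hΨS : MapsTo Ψ (Icc c d) S)
    (hΨ : ContinuousOn Ψ (Icc c d)) (hderiv : ∀ x ∈ Ioo c d, HasDerivAt Ψ (G (Ψ x)) x) :
    ContDiffOn ℝ k Ψ (Icc c d) := by
  induction k with
  | zero => exact contDiffOn_zero.mpr hΨ
  | succ m ih =>
    have hGm : ContDiffOn ℝ m G S := hG.of_le (by exact_mod_cast m.le_succ)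
    have hu : ContDiffOn ℝ m (G ∘ Ψ) (Icc c d) := hGm.comp (ih hGm) hΨS
    have hder := fun x (hx : x ∈ Icc c d) =>
      hasDerivWithinAt_Icc_of_hasDerivAt_Ioo hcd hΨ hu.continuousOn hderiv hx
    rw [Nat.cast_succ, contDiffOn_succ_iff_derivWithin (uniqueDiffOn_Icc hcd)]
    exact ⟨fun x hx => (hder x hx).differentiableWithinAt, by simp,
      hu.congr fun x hx => (hder x hx).derivWithin (uniqueDiffOn_Icc hcd x hx)⟩

lemma mapsTo_closure_of_eqOn {Ψ ψ : ℝ → ℝ} {t : Set ℝ} (hΨ : Continuous Ψ)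
    (hΨψ : EqOn Ψ ψ (Ioo 0 1)) (hψ : MapsTo ψ (Ioo 0 1) t) :
    MapsTo Ψ (Icc 0 1) (closure t) := by
  rw [← closure_Ioo zero_ne_one]
  refine fun x hx => closure_mono ?_ (image_closure_subset_closure_image hΨ ⟨x, hx, rfl⟩)
  rintro _ ⟨y, hy, rfl⟩
  exact hΨψ hy ▸ hψ hy

/-- The extension is Lipschitz since `|ψ'| = |T' ∘ ψ|⁻¹ ≤ 1`, and `C^k` wherever it stays in `S`
by bootstrapping `Ψ' = (T' ∘ Ψ)⁻¹`. -/
lemma exists_extension_inverse_branch {T ψ : ℝ → ℝ} {p q : ℝ} {S : Set ℝ} {k : ℕ}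
    (hIooS : Ioo p q ⊆ S) (hSIcc : S ⊆ Icc p q) (hSu : UniqueDiffOn ℝ S)
    (hT : ContDiffOn ℝ (k + 1) T S) (hT' : ∀ x ∈ Ioo p q, 1 ≤ |deriv T x|)
    (hinj : InjOn T (Ioo p q)) (hψ : MapsTo ψ (Ioo 0 1) (Ioo p q))
    (hTψ : ∀ y ∈ Ioo (0 : ℝ) 1, T (ψ y) = y) :
    ∃ Ψ : ℝ → ℝ, Continuous Ψ ∧ EqOn Ψ ψ (Ioo 0 1) ∧
      ∀ c d, 0 ≤ c → c < d → d ≤ 1 → MapsTo Ψ (Icc c d) S → ContDiffOn ℝ k Ψ (Icc c d) := by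
  have hIoo_nhds : ∀ x ∈ Ioo p q, S ∈ 𝓝 x := fun x hx =>
    mem_of_superset (Ioo_mem_nhds hx.1 hx.2) hIooS
  have hdW : ∀ x ∈ Ioo p q, derivWithin T S x = deriv T x := fun x hx =>
    derivWithin_of_mem_nhds (hIoo_nhds x hx)
  have hTd : ContDiffOn ℝ k (derivWithin T S) S := hT.derivWithin hSu le_rfl
  have hpq : p < q := by
    obtain ⟨h₁, h₂⟩ := hψ (show (1 / 2 : ℝ) ∈ Ioo 0 1 by norm_num)
    exact h₁.trans h₂
  have hlow : ∀ x ∈ S, 1 ≤ |derivWithin T S x| := fun x hx =>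
    ContinuousWithinAt.closure_le (f := fun _ => 1) (g := fun y => |derivWithin T S y|)
      (by rw [closure_Ioo hpq.ne]; exact hSIcc hx) continuousWithinAt_const
      ((hTd.continuousOn x hx).abs.mono hIooS) fun y hy => (hdW y hy).symm ▸ hT' y hy
  have hne : ∀ x ∈ S, derivWithin T S x ≠ 0 := fun x hx h => by
    have := hlow x hx
    rw [h, abs_zero] at this
    linarith
  have hψd : ∀ y ∈ Ioo (0 : ℝ) 1, HasDerivAt ψ (derivWithin T S (ψ y))⁻¹ y := by
    intro y hy
    have hsd : HasStrictDerivAt T (deriv T (ψ y)) (ψ y) :=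
      (hT.contDiffAt (hIoo_nhds _ (hψ hy))).hasStrictDerivAt (by simp)
    rw [hdW _ (hψ hy)]
    exact hasDerivAt_of_rightInverse isOpen_Ioo isOpen_Ioo hinj hψ hTψ hy hsd
      (hdW _ (hψ hy) ▸ hne _ (hIooS (hψ hy)))
  have hlip : LipschitzOnWith 1 ψ (Ioo 0 1) :=
    (convex_Ioo 0 1).lipschitzOnWith_of_nnnorm_hasDerivWithin_le
      (fun y hy => (hψd y hy).hasDerivWithinAt) fun y hy => by
        rw [← NNReal.coe_le_coe, coe_nnnorm, NNReal.coe_one, Real.norm_eq_abs, abs_inv]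
        exact inv_le_one_of_one_le₀ (hlow _ (hIooS (hψ hy)))
  obtain ⟨Ψ, hΨ, hψΨ⟩ := hlip.extend_real
  refine ⟨Ψ, hΨ.continuous, fun y hy => (hψΨ hy).symm, fun c d hc hcd hd hΨS => ?_⟩
  refine contDiffOn_Icc_of_hasDerivAt_comp hcd (hTd.inv hne) hΨS hΨ.continuous.continuousOn
    fun x hx => ?_
  have hx01 : x ∈ Ioo (0 : ℝ) 1 := ⟨hc.trans_lt hx.1, hx.2.trans_le hd⟩
  rw [← hψΨ hx01]
  refine (hψd x hx01).congr_of_eventuallyEq ?_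
  filter_upwards [isOpen_Ioo.mem_nhds hx01] with z hz
  exact (hψΨ hz).symm

end InverseBranches

section ParabolicMap

variable {T : ℝ → ℝ} {a : ℝ} {ψ₀ ψ₁ : ℝ → ℝ} {r : ℕ∞} {c α ε ρ : ℝ}

/-- Near `0`, `T' - 1 ~ c x^α > 0`; monotonicity of `T'` carries `T' > 1` up to `ε`, and beyond
`ε` the branch is increasing and expanding. -/
lemma Hyp.one_lt_deriv (hT : Hyp T a ψ₀ ψ₁ r c α ε ρ) {x : ℝ} (hx : x ∈ Ioo 0 a) :
    1 < deriv T x := by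
  by_cases hxε : x < ε
  · obtain ⟨δ, hδ, hδsub⟩ := mem_nhdsGT_iff_exists_Ioo_subset.mp
      (hT.asymp.eventually (eventually_gt_nhds zero_lt_one))
    set t := min x δ / 2
    have ht : t ∈ Ioo 0 (min x δ) := ⟨half_pos (lt_min hx.1 hδ), half_lt_self (lt_min hx.1 hδ)⟩
    have hTt : 1 < deriv T t := by
      have h : 0 < (deriv T t - 1) / (c * t ^ α) := hδsub ⟨ht.1, ht.2.trans_le (min_le_right _ _)⟩
      rw [div_pos_iff_of_pos_right (mul_pos hT.hc (Real.rpow_pos_of_pos ht.1 α))] at h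
      linarith
    have hlt : t < x := ht.2.trans_le (min_le_left _ _)
    exact hTt.trans (hT.dmono ⟨ht.1, hlt.trans hxε⟩ ⟨hx.1, hxε⟩ hlt)
  · have hd0 : 0 ≤ deriv T x := by
      rw [← derivWithin_of_isOpen isOpen_Ioo hx]
      exact hT.mono0.monotoneOn.derivWithin_nonneg
    have := hT.expand x (Or.inl ⟨not_lt.mp hxε, hx.2⟩)
    rw [abs_of_nonneg hd0] at this
    linarith [hT.hρ]

lemma Hyp.exists_branch_extensions (hT : Hyp T a ψ₀ ψ₁ r c α ε ρ) {k : ℕ} (hk : (k : ℕ∞) < r) :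
    ∃ Ψ₀ Ψ₁ : ℝ → ℝ, EqOn Ψ₀ ψ₀ (Ioo 0 1) ∧ EqOn Ψ₁ ψ₁ (Ioo 0 1) ∧
      ContDiffOn ℝ k Ψ₀ (Ioc 0 1) ∧ ContDiffOn ℝ k Ψ₁ (Icc 0 1) ∧
      MapsTo Ψ₀ (Ioc 0 1) (Ioc 0 a) ∧ MapsTo Ψ₁ (Icc 0 1) (Icc a 1) := by
  obtain ⟨ha0, ha1⟩ := hT.ha
  have hkr : ((k : ℕ) : WithTop ℕ∞) + 1 ≤ r := by exact_mod_cast Order.add_one_le_of_lt hk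
  obtain ⟨Ψ₀, hΨ₀, hΨ₀ψ, hΨ₀k⟩ := exists_extension_inverse_branch (S := Ioc 0 a)
    Ioo_subset_Ioc_self Ioc_subset_Icc_self (uniqueDiffOn_Ioc 0 a) (hT.smooth0.of_le hkr)
    (fun x hx => (hT.one_lt_deriv hx).le.trans (le_abs_self _))
    (fun x hx y hy hxy => by rw [← hT.inv0' x hx, ← hT.inv0' y hy, hxy])
    (fun y hy => (hT.inv0 y hy).1) fun y hy => (hT.inv0 y hy).2
  obtain ⟨Ψ₁, hΨ₁, hΨ₁ψ, hΨ₁k⟩ := exists_extension_inverse_branch (S := Icc a 1)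
    Ioo_subset_Icc_self subset_rfl (uniqueDiffOn_Icc ha1) (hT.smooth1.of_le hkr)
    (fun x hx => (hT.expand x (Or.inr hx)).trans' hT.hρ.le)
    (fun x hx y hy hxy => by rw [← hT.inv1' x hx, ← hT.inv1' y hy, hxy])
    (fun y hy => (hT.inv1 y hy).1) fun y hy => (hT.inv1 y hy).2
  have hmaps₁ : MapsTo Ψ₁ (Icc 0 1) (Icc a 1) := closure_Ioo ha1.ne ▸
    mapsTo_closure_of_eqOn hΨ₁ hΨ₁ψ fun y hy => (hT.inv1 y hy).1
  have hψ₀mono : ∀ u ∈ Ioo (0 : ℝ) 1, ∀ v ∈ Ioo (0 : ℝ) 1, u ≤ v → ψ₀ u ≤ ψ₀ v := by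
    intro u hu v hv huv
    by_contra! hlt
    have := hT.mono0 (hT.inv0 v hv).1 (hT.inv0 u hu).1 hlt
    rw [(hT.inv0 u hu).2, (hT.inv0 v hv).2] at this
    linarith
  have hΨ₀1 : ψ₀ (1 / 2) ≤ Ψ₀ 1 :=
    ContinuousWithinAt.closure_le (s := Ioo (1 / 2) 1) (by rw [closure_Ioo (by norm_num)]; norm_num)
      continuousWithinAt_const hΨ₀.continuousWithinAt fun y hy => by
        rw [hΨ₀ψ ⟨by linarith [hy.1], hy.2⟩]
        exact hψ₀mono _ (by norm_num) y ⟨by linarith [hy.1], hy.2⟩ hy.1.le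
  have hmaps₀ : MapsTo Ψ₀ (Ioc 0 1) (Ioc 0 a) := by
    intro x hx
    rcases hx.2.lt_or_eq with hx1 | rfl
    · rw [hΨ₀ψ ⟨hx.1, hx1⟩]
      exact Ioo_subset_Ioc_self (hT.inv0 x ⟨hx.1, hx1⟩).1
    · have h := mapsTo_closure_of_eqOn hΨ₀ hΨ₀ψ (fun y hy => (hT.inv0 y hy).1)
        (right_mem_Icc.mpr zero_le_one)
      rw [closure_Ioo ha0.ne] at h
      exact ⟨hΨ₀1.trans_lt' (hT.inv0 _ (by norm_num)).1.1, h.2⟩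
  refine ⟨Ψ₀, Ψ₁, hΨ₀ψ, hΨ₁ψ, fun x hx => ?_, hΨ₁k 0 1 le_rfl zero_lt_one le_rfl hmaps₁,
    hmaps₀, hmaps₁⟩
  have hIcc : Icc (x / 2) 1 ⊆ Ioc 0 1 := fun y hy => ⟨by linarith [hy.1, hx.1], hy.2⟩
  refine ((hΨ₀k (x / 2) 1 (by linarith [hx.1]) (by linarith [hx.1, hx.2]) le_rfl
    (hmaps₀.mono_left hIcc)) x ⟨by linarith [hx.1], hx.2⟩).mono_of_mem_nhdsWithin ?_
  exact mem_nhdsWithin.mpr ⟨Ioi (x / 2), isOpen_Ioi, by simp [hx.1],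
    fun y hy => ⟨hy.1.le, hy.2.2⟩⟩

lemma Hyp.iterate_ψ₀_mem_Ioo (hT : Hyp T a ψ₀ ψ₁ r c α ε ρ) (n : ℕ) {x : ℝ}
    (hx : x ∈ Ioo (0 : ℝ) 1) : ψ₀^[n] (ψ₁ x) ∈ Ioo (0 : ℝ) 1 := by
  induction n with
  | zero => exact ⟨hT.ha.1.trans (hT.inv1 x hx).1.1, (hT.inv1 x hx).1.2⟩
  | succ n ih =>
    rw [Function.iterate_succ_apply']
    exact ⟨(hT.inv0 _ ih).1.1, (hT.inv0 _ ih).1.2.trans hT.ha.2⟩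

lemma Hyp.iterate_succ_ψ₀_mem_Ioo (hT : Hyp T a ψ₀ ψ₁ r c α ε ρ) (n : ℕ) {x : ℝ}
    (hx : x ∈ Ioo (0 : ℝ) 1) : ψ₀^[n + 1] (ψ₁ x) ∈ Ioo 0 a := by
  rw [Function.iterate_succ_apply']
  exact (hT.inv0 _ (hT.iterate_ψ₀_mem_Ioo n hx)).1

lemma Hyp.iterate_T_iterate_ψ₀ (hT : Hyp T a ψ₀ ψ₁ r c α ε ρ) (j m : ℕ) {x : ℝ}
    (hx : x ∈ Ioo (0 : ℝ) 1) : T^[j] (ψ₀^[j + m] (ψ₁ x)) = ψ₀^[m] (ψ₁ x) := by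
  induction j with
  | zero => simp
  | succ j ih =>
    rw [Function.iterate_succ_apply, show j + 1 + m = (j + m) + 1 by omega,
      Function.iterate_succ_apply', (hT.inv0 _ (hT.iterate_ψ₀_mem_Ioo (j + m) hx)).2, ih]

lemma Hyp.tau_iterate_ψ₀ (hT : Hyp T a ψ₀ ψ₁ r c α ε ρ) (n : ℕ) {x : ℝ}
    (hx : x ∈ Ioo (0 : ℝ) 1) : tau T a (ψ₀^[n] (ψ₁ x)) = n := by
  have hn : n ∈ {j : ℕ | T^[j] (ψ₀^[n] (ψ₁ x)) ∈ Ioo a 1} := by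
    have h := hT.iterate_T_iterate_ψ₀ n 0 hx
    rw [Nat.add_zero, Function.iterate_zero_apply] at h
    show T^[n] (ψ₀^[n] (ψ₁ x)) ∈ Ioo a 1
    rw [h]
    exact (hT.inv1 x hx).1
  refine le_antisymm (Nat.sInf_le hn) (le_csInf ⟨n, hn⟩ fun j hj => ?_)
  by_contra! hjn
  have h := hT.iterate_succ_ψ₀_mem_Ioo (n - j - 1) hx
  rw [show n - j - 1 + 1 = n - j by omega, ← hT.iterate_T_iterate_ψ₀ j (n - j) hx,
    show j + (n - j) = n by omega] at h
  exact (hj : _ ∈ Ioo a 1).1.not_gt h.2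

lemma Hyp.indw_iterate_ψ₀ (hT : Hyp T a ψ₀ ψ₁ r c α ε ρ) (v : ℝ → ℝ) (n : ℕ) {x : ℝ}
    (hx : x ∈ Ioo (0 : ℝ) 1) :
    indw T a v (ψ₀^[n] (ψ₁ x)) = ∑ m ∈ Finset.range (n + 1), v (ψ₀^[m] (ψ₁ x)) := by
  rw [indw, hT.tau_iterate_ψ₀ n hx, ← Finset.sum_range_reflect]
  refine Finset.sum_congr rfl fun j hj => ?_
  have hj : j ≤ n := Nat.lt_succ_iff.mp (Finset.mem_range.mp hj)
  have h := hT.iterate_T_iterate_ψ₀ (n - j) j hx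
  rw [show n - j + j = n by omega] at h
  rw [show n + 1 - 1 - j = n - j by omega, h]

lemma phib_succ (ψ₀ ψ₁ : ℝ → ℝ) (n : ℕ) : phib ψ₀ ψ₁ (n + 1) = ψ₀^[n] ∘ ψ₁ := rfl

lemma Hyp.exists_contDiffOn_extensions (hT : Hyp T a ψ₀ ψ₁ r c α ε ρ) {v : ℝ → ℝ} {k : ℕ}
    (hk : (k : ℕ∞) < r) (hv : HypV a v k) :
    ∃ Φ W : ℕ → ℝ → ℝ, ∀ n, ContDiffOn ℝ k (Φ n) (Icc 0 1) ∧ MapsTo (Φ n) (Icc 0 1) (Icc 0 1) ∧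
      EqOn (phib ψ₀ ψ₁ (n + 1)) (Φ n) (Ioo 0 1) ∧ ContDiffOn ℝ k (W n) (Icc 0 1) ∧
      EqOn (fun x => indw T a v (phib ψ₀ ψ₁ (n + 1) x)) (W n) (Ioo 0 1) := by
  obtain ⟨Ψ₀, Ψ₁, hΨ₀ψ, hΨ₁ψ, hΨ₀, hΨ₁, hmaps₀, hmaps₁⟩ := hT.exists_branch_extensions hk
  obtain ⟨v₀, hv₀, hvv₀, -⟩ := hv.ext0
  obtain ⟨v₁, hv₁, hvv₁⟩ := hv.ext1
  have hΦ : ∀ n, ContDiffOn ℝ k (Ψ₀^[n] ∘ Ψ₁) (Icc 0 1) ∧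
      MapsTo (Ψ₀^[n] ∘ Ψ₁) (Icc 0 1) (Ioc 0 1) ∧ EqOn (Ψ₀^[n] ∘ Ψ₁) (ψ₀^[n] ∘ ψ₁) (Ioo 0 1) := by
    intro n
    induction n with
    | zero => exact ⟨hΨ₁, fun x hx => ⟨hT.ha.1.trans_le (hmaps₁ hx).1, (hmaps₁ hx).2⟩, hΨ₁ψ⟩
    | succ n ih =>
      rw [Function.iterate_succ']
      refine ⟨hΨ₀.comp ih.1 ih.2.1,
        fun x hx => Ioc_subset_Ioc_right hT.ha.2.le (hmaps₀ (ih.2.1 hx)), fun x hx => ?_⟩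
      have h := ih.2.2 hx
      simp only [Function.comp_apply, Function.iterate_succ_apply'] at h ⊢
      rw [h]
      exact hΨ₀ψ (hT.iterate_ψ₀_mem_Ioo n hx)
  have hΦa : ∀ m, MapsTo (Ψ₀^[m + 1] ∘ Ψ₁) (Icc 0 1) (Icc 0 a) := fun m x hx => by
    rw [Function.comp_apply, Function.iterate_succ_apply']
    exact Ioc_subset_Icc_self (hmaps₀ ((hΦ m).2.1 hx))
  refine ⟨fun n => Ψ₀^[n] ∘ Ψ₁,
    fun n x => v₁ (Ψ₁ x) + ∑ m ∈ Finset.range n, v₀ ((Ψ₀^[m + 1] ∘ Ψ₁) x),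
    fun n => ⟨(hΦ n).1, (hΦ n).2.1.mono_right Ioc_subset_Icc_self,
      fun x hx => ((hΦ n).2.2 hx).symm, (hv₁.comp hΨ₁ hmaps₁).add
        (ContDiffOn.sum fun m _ => hv₀.comp (hΦ (m + 1)).1 (hΦa m)), fun x hx => ?_⟩⟩
  dsimp only
  rw [phib_succ, Function.comp_apply, hT.indw_iterate_ψ₀ v n hx, Finset.sum_range_succ', add_comm,
    Function.iterate_zero_apply, hvv₁ (hT.inv1 x hx).1, hΨ₁ψ hx]
  refine congrArg _ (Finset.sum_congr rfl fun m _ => ?_)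
  rw [hvv₀ (hT.iterate_succ_ψ₀_mem_Ioo m hx), (hΦ (m + 1)).2.2 hx, Function.comp_apply]

def transferTerm (T : ℝ → ℝ) (a : ℝ) (ψ₀ ψ₁ v : ℝ → ℝ) (z : ℂ) (f : ℝ → ℂ) (n : ℕ) (x : ℝ) : ℂ :=
  z ^ (n + 1) * Real.exp (indw T a v (phib ψ₀ ψ₁ (n + 1) x)) * f (phib ψ₀ ψ₁ (n + 1) x)

lemma Hyp.exists_contDiffOn_transferTerm (hT : Hyp T a ψ₀ ψ₁ r c α ε ρ) {v : ℝ → ℝ} {k : ℕ}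
    (hk : (k : ℕ∞) < r) (hv : HypV a v k) {z : ℂ} (hz : ‖z‖ ≤ 1) {f : ℝ → ℂ}
    (hf : ContDiffOn ℝ k f (Icc 0 1)) :
    ∃ g : ℕ → ℝ → ℂ, ∀ n, ContDiffOn ℝ k (g n) (Icc 0 1) ∧
      EqOn (transferTerm T a ψ₀ ψ₁ v z f n) (g n) (Ioo 0 1) ∧
      ∀ j ≤ k, ∀ x ∈ Icc (0 : ℝ) 1, ‖iteratedDerivWithin j (g n) (Icc 0 1) x‖ ≤
        4 ^ k * k.factorial * nrm k f *
          (nrm k (fun x => Real.exp (indw T a v (phib ψ₀ ψ₁ (n + 1) x))) *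
            (1 + nrm k (phib ψ₀ ψ₁ (n + 1)) ^ k)) := by
  obtain ⟨Φ, W, hext⟩ := hT.exists_contDiffOn_extensions hk hv
  refine ⟨fun n x => z ^ (n + 1) • (Real.exp (W n x) • f (Φ n x)), fun n => ?_⟩
  obtain ⟨hΦ, hΦI, hΦeq, hW, hWeq⟩ := hext n
  have hE : ContDiffOn ℝ k (fun x => Real.exp (W n x)) (Icc 0 1) :=
    Real.contDiff_exp.comp_contDiffOn hW
  have hEeq : EqOn (fun x => Real.exp (indw T a v (phib ψ₀ ψ₁ (n + 1) x)))
      (fun x => Real.exp (W n x)) (Ioo 0 1) := fun x hx => congrArg Real.exp (hWeq hx)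
  refine ⟨((hE.smul (hf.comp hΦ hΦI)).const_smul _), fun x hx => ?_, fun j hj x hx => ?_⟩
  · simp only [transferTerm, hΦeq hx, ← hWeq hx, Complex.real_smul, smul_eq_mul, mul_assoc]
  · change ‖iteratedDerivWithin j (z ^ (n + 1) • fun x => Real.exp (W n x) • f (Φ n x))
      (Icc 0 1) x‖ ≤ _
    rw [iteratedDerivWithin_const_smul_field, norm_smul, ← one_mul (_ * _ * _ * _)]
    refine mul_le_mul (by simpa using pow_le_one₀ (norm_nonneg z) hz) ?_ (norm_nonneg _) zero_le_one
    refine (norm_iteratedDerivWithin_smul_comp_le hE hΦ hf hΦI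
      (fun i hi y hy => norm_iteratedDerivWithin_le_nrm hE hEeq hi hy)
      (fun i hi y hy => norm_iteratedDerivWithin_le_nrm hΦ hΦeq hi hy)
      (fun i hi y hy => norm_iteratedDerivWithin_le_nrm hf (fun _ _ => rfl) hi hy) hj hx
      ).trans_eq ?_
    ring

end ParabolicMap

/-- Theorem 3.1, convergence part: for every `z ∈ ℂ` with `|z| ≤ 1` and every
`f ∈ C^k([0,1])`, the series `Q_w(z)f = ∑_{n ≥ 1} zⁿ e^{w∘φ_n} (f∘φ_n)` converges absolutely
in the norm `‖·‖_k` to a `C^k` function on `[0,1]`, with `‖Q_w(z)f‖_k ≤ C(k) c_k ‖f‖_k` for a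
constant `C(k)` independent of `f` and `z`; in particular `Q_w(z)` is a bounded operator on
`C^k([0,1])`. -/
theorem statement7 (T : ℝ → ℝ) (a : ℝ) (ψ₀ ψ₁ : ℝ → ℝ) (r : ℕ∞) (c α ε ρ : ℝ)
    (hT : Hyp T a ψ₀ ψ₁ r c α ε ρ) (v : ℝ → ℝ) (k : ℕ) (hk : (k : ℕ∞) < r)
    (hv : HypV a v k) (ck : ℝ) (h7 : H7 T a ψ₀ ψ₁ v k ck) :
    ∃ C : ℝ, 0 < C ∧ ∀ z : ℂ, ‖z‖ ≤ 1 → ∀ f : ℝ → ℂ, ContDiffOn ℝ k f (Set.Icc 0 1) →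
      ∃ F : ℝ → ℂ,
        ContDiffOn ℝ k F (Set.Icc 0 1) ∧
        (∀ x ∈ Set.Ioo (0 : ℝ) 1,
          HasSum (fun n : ℕ => z ^ (n + 1) * Real.exp (indw T a v (phib ψ₀ ψ₁ (n + 1) x)) *
            f (phib ψ₀ ψ₁ (n + 1) x)) (F x)) ∧
        Summable (fun n : ℕ => nrm k (fun x => z ^ (n + 1) *
          Real.exp (indw T a v (phib ψ₀ ψ₁ (n + 1) x)) * f (phib ψ₀ ψ₁ (n + 1) x))) ∧
        nrm k F ≤ C * ck * nrm k f := by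
  obtain ⟨C, hC, hsum⟩ := exists_hasSum_contDiffOn_Icc (E := ℂ) k
  refine ⟨C * (4 ^ k * k.factorial), by positivity, fun z hz f hf => ?_⟩
  obtain ⟨g, hg⟩ := hT.exists_contDiffOn_transferTerm hk hv hz hf
  obtain ⟨hsummable, hck⟩ := h7 k le_rfl
  have hM := hsummable.mul_left (4 ^ k * k.factorial * nrm k f)
  obtain ⟨F, hF, hFsum, hFnrm⟩ := hsum g _ (fun n => (hg n).1) (fun n => (hg n).2.2) hM
  refine ⟨F, hF, fun x hx => ?_, ?_, ?_⟩
  · have h := hFsum x (Ioo_subset_Icc_self hx)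
    rwa [← funext fun n => (hg n).2.1 hx] at h
  · refine hM.of_nonneg_of_le (fun n => nrm_nonneg k _) fun n =>
      nrm_le_of_eqOn (hg n).2.1 ?_ (hg n).2.2
    exact (norm_nonneg _).trans ((hg n).2.2 0 k.zero_le 0 (left_mem_Icc.mpr zero_le_one))
  · exact hFnrm.trans (le_of_eq_of_le (by rw [tsum_mul_left]; ring) (mul_le_mul_of_nonneg_right
      (mul_le_mul_of_nonneg_left hck (by positivity)) (nrm_nonneg k f)))

end
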